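/- arXiv:1507.07623 — 2 statements merged into one kernel-verified Lean document; each statement's English description precedes it below -/
import Mathlib

section
/- For every n ≥ 1, the volume of the graph polytope of the complete graph K_n equals 2^{1−n}, i.e. vol(K_n) = 2^{1−n}. -/
open MeasureTheory

/-- The graph polytope volume: `vol(G)` is the Lebesgue volume of
`{x ∈ [0,1]^V : x_i + x_j ≤ 1 for every edge ij of G}`. -/
noncomputable def gvol {V : Type*} [Fintype V] (G : SimpleGraph V) : ℝ :=
  (volume {x : V → ℝ | (∀ i, x i ∈ Set.Icc (0:ℝ) 1) ∧
      ∀ ⦃i j⦄, G.Adj i j → x i + x j ≤ 1}).toReal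

/-!
In the polytope of `K_n` at most one coordinate exceeds `1/2`. The points with all coordinates
at most `1/2` form a cube of volume `2^{-n}`. A point whose `k`-th coordinate exceeds `1/2`
satisfies `x_i ≤ 1 - x_k` for `i ≠ k`, so the reflection `x_k ↦ 1 - x_k` maps these points onto
the points of `[0, 1/2)^n` whose largest coordinate is the `k`-th. Up to the null sets where two
coordinates tie, these regions tile `[0, 1/2)^n`, which therefore contributes another `2^{-n}`.
-/

open Set Function

section

variable {ι : Type*} [Fintype ι]

theorem volume_setOf_apply_eq_apply {i j : ι} (hij : i ≠ j) :
    volume {x : ι → ℝ | x i = x j} = 0 := by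
  classical
  let L : (ι → ℝ) →ₗ[ℝ] ℝ := LinearMap.proj (R := ℝ) (φ := fun _ => ℝ) i - LinearMap.proj j
  have hL : {x : ι → ℝ | x i = x j} = (LinearMap.ker L : Set (ι → ℝ)) := by
    ext x
    simp [L, sub_eq_zero]
  rw [hL]
  refine Measure.addHaar_submodule _ _ fun htop => ?_
  have : Pi.single i 1 ∈ LinearMap.ker L := htop ▸ Submodule.mem_top
  simp [L, Pi.single_eq_of_ne hij.symm] at this

theorem measurePreserving_update_one_sub [DecidableEq ι] (k : ι) :
    MeasurePreserving (fun x : ι → ℝ => update x k (1 - x k)) volume volume := by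
  have h : (fun x : ι → ℝ => update x k (1 - x k)) =
      fun x i => (if i = k then fun t : ℝ => 1 - t else id) (x i) := by
    funext x i
    by_cases h : i = k <;> simp [h]
  rw [h]
  refine volume_preserving_pi fun i => ?_
  split_ifs
  · exact volume.measurePreserving_sub_left 1
  · exact MeasurePreserving.id _

end

def graphPolytope {V : Type*} (G : SimpleGraph V) : Set (V → ℝ) :=
  {x | (∀ i, x i ∈ Icc (0 : ℝ) 1) ∧ ∀ ⦃i j⦄, G.Adj i j → x i + x j ≤ 1}

theorem gvol_eq_toReal_volume_graphPolytope {V : Type*} [Fintype V] (G : SimpleGraph V) :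
    gvol G = (volume (graphPolytope G)).toReal :=
  rfl

namespace CompleteGraphPolytope

variable {ι : Type*}

def highAt (k : ι) : Set (ι → ℝ) :=
  {x | x k ∈ Ioc (1 / 2) 1 ∧ ∀ i ≠ k, x i ∈ Icc 0 (1 - x k)}

def maxAt (k : ι) : Set (ι → ℝ) :=
  {y | y k ∈ Ico 0 (1 / 2) ∧ ∀ i ≠ k, y i ∈ Icc 0 (y k)}

theorem graphPolytope_top_eq :
    graphPolytope (⊤ : SimpleGraph ι) = univ.pi (fun _ => Icc 0 (1 / 2)) ∪ ⋃ k, highAt k := by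
  ext x
  simp only [graphPolytope, highAt, mem_union, mem_pi, mem_univ, forall_const, mem_iUnion,
    mem_ofPred_eq, SimpleGraph.top_adj, mem_Icc, mem_Ioc]
  constructor
  · rintro ⟨hx, hsum⟩
    by_cases hlow : ∀ i, x i ≤ 1 / 2
    · exact .inl fun i => ⟨(hx i).1, hlow i⟩
    · push Not at hlow
      obtain ⟨k, hk⟩ := hlow
      exact .inr ⟨k, ⟨hk, (hx k).2⟩, fun i hik => ⟨(hx i).1, by linarith [hsum hik]⟩⟩
  · rintro (hlow | ⟨k, ⟨hk, hk1⟩, hrest⟩)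
    · exact ⟨fun i => ⟨(hlow i).1, by linarith [(hlow i).2]⟩,
        fun i j _ => by linarith [(hlow i).2, (hlow j).2]⟩
    · have hbound : ∀ i, 0 ≤ x i ∧ x i ≤ 1 := fun i => by
        by_cases hik : i = k
        · subst hik; exact ⟨by linarith, hk1⟩
        · exact ⟨(hrest i hik).1, by linarith [(hrest i hik).2]⟩
      refine ⟨hbound, fun i j hij => ?_⟩
      by_cases hik : i = k
      · subst hik; linarith [(hrest j (Ne.symm hij)).2]
      by_cases hjk : j = k
      · subst hjk; linarith [(hrest i hij).2]
      linarith [(hrest i hik).2, (hrest j hjk).2]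

theorem disjoint_pi_iUnion_highAt :
    Disjoint (univ.pi fun _ => Icc (0 : ℝ) (1 / 2)) (⋃ k : ι, highAt k) := by
  refine Set.disjoint_iUnion_right.2 fun k => Set.disjoint_left.2 fun x hlow hhigh => ?_
  linarith [(hlow k (mem_univ k)).2, hhigh.1.1]

theorem pairwise_disjoint_highAt : Pairwise (Disjoint on (highAt : ι → Set (ι → ℝ))) := by
  intro k j hkj
  rw [onFun, Set.disjoint_left]
  intro x hk hj
  linarith [hk.1.1, hj.1.1, (hj.2 k hkj).2]

variable [Fintype ι]

theorem measurableSet_highAt (k : ι) : MeasurableSet (highAt k) := by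
  unfold highAt; measurability

theorem measurableSet_maxAt (k : ι) : MeasurableSet (maxAt k) := by
  unfold maxAt; measurability

theorem volume_highAt [DecidableEq ι] (k : ι) : volume (highAt k) = volume (maxAt k) := by
  have hpre : (fun x : ι → ℝ => update x k (1 - x k)) ⁻¹' maxAt k = highAt k := by
    ext x
    simp only [maxAt, highAt, mem_preimage, mem_ofPred_eq, update_self, mem_Ico, mem_Ioc]
    refine and_congr (by constructor <;> intro h <;> constructor <;> linarith [h.1, h.2])
      (forall₂_congr fun i hik => by rw [update_of_ne hik])
  rw [← hpre]
  exact (measurePreserving_update_one_sub k).measure_preimage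
    (measurableSet_maxAt k).nullMeasurableSet

theorem pairwise_aedisjoint_maxAt :
    Pairwise (AEDisjoint volume on (maxAt : ι → Set (ι → ℝ))) := by
  intro k j hkj
  refine measure_mono_null (fun y ⟨hk, hj⟩ => ?_) (volume_setOf_apply_eq_apply hkj)
  exact le_antisymm (hj.2 k hkj).2 (hk.2 j hkj.symm).2

theorem iUnion_maxAt [Nonempty ι] : ⋃ k : ι, maxAt k = univ.pi fun _ => Ico 0 (1 / 2) := by
  ext y
  simp only [maxAt, mem_iUnion, mem_ofPred_eq, mem_pi, mem_univ, forall_const, mem_Ico, mem_Icc]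
  constructor
  · rintro ⟨k, hk, hrest⟩ i
    by_cases hik : i = k
    · exact hik ▸ hk
    · exact ⟨(hrest i hik).1, (hrest i hik).2.trans_lt hk.2⟩
  · intro hy
    obtain ⟨k, hk⟩ := Finite.exists_max y
    exact ⟨k, hy k, fun i _ => ⟨(hy i).1, hk i⟩⟩

theorem volume_graphPolytope_top [Nonempty ι] :
    volume (graphPolytope (⊤ : SimpleGraph ι)) = 2 * 2⁻¹ ^ Fintype.card ι := by
  classical
  have hhigh : volume (⋃ k : ι, highAt k) = 2⁻¹ ^ Fintype.card ι := by
    rw [measure_iUnion pairwise_disjoint_highAt measurableSet_highAt]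
    simp_rw [volume_highAt]
    rw [← measure_iUnion₀ pairwise_aedisjoint_maxAt
      fun k => (measurableSet_maxAt k).nullMeasurableSet, iUnion_maxAt, volume_pi_pi]
    simp [Real.volume_Ico]
  rw [graphPolytope_top_eq, measure_union disjoint_pi_iUnion_highAt
      (MeasurableSet.iUnion measurableSet_highAt), hhigh, volume_pi_pi]
  simp [Real.volume_Icc, two_mul]

end CompleteGraphPolytope

/-- The volume of the graph polytope of the complete graph `K_n` is `2^{1-n}`. -/
theorem vol_complete (n : ℕ) (hn : 1 ≤ n) :
    gvol (⊤ : SimpleGraph (Fin n)) = (2 : ℝ) ^ ((1 : ℤ) - (n : ℤ)) := by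
  have : Nonempty (Fin n) := ⟨⟨0, hn⟩⟩
  rw [gvol_eq_toReal_volume_graphPolytope, CompleteGraphPolytope.volume_graphPolytope_top,
    zpow_sub₀ two_ne_zero]
  simp [div_eq_mul_inv]
end

section
/- For all positive integers m and n, vol(K_{m,n}) = m·B(m, n+1) = n·B(m+1, n), where B is the Euler beta function. -/
open MeasureTheory

/-- The Euler beta function `B(r,s) = ∫_0^1 x^{r-1}(1-x)^{s-1} dx`. -/
noncomputable def betaFn (r s : ℝ) : ℝ :=
  ∫ x in (0:ℝ)..1, x ^ (r - 1) * (1 - x) ^ (s - 1)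

/-!
Over a point `u ∈ [0,1]^m` the fibre of `P(K_{m,n})` is the cube `[0, 1 - max u]^n`, so
`vol(K_{m,n}) = ∫_{[0,1]^m} (1 - max u)^n du`. The maximum of `m` independent uniform variables
on `[0,1]` has density `m t^(m-1)`, which turns this into
`m ∫_0^1 t^(m-1) (1-t)^n dt = m B(m, n+1)`.
Exchanging the two sides of `K_{m,n}` and using `B(r, s) = B(s, r)` gives the second formula.
-/

open Set

def SimpleGraph.completeBipartiteGraphComm (α β : Type*) :
    completeBipartiteGraph α β ≃g completeBipartiteGraph β α where
  __ := Equiv.sumComm α β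
  map_rel_iff' := by simp

theorem SimpleGraph.Iso.gvol_eq {V W : Type*} [Fintype V] [Fintype W] {G : SimpleGraph V}
    {H : SimpleGraph W} (e : G ≃g H) : gvol G = gvol H := by
  have hpres := volume_measurePreserving_piCongrLeft (fun _ : W => ℝ) e.toEquiv
  rw [gvol, gvol, ← hpres.measure_preimage_equiv]
  congr 2
  ext x
  have happ (w : W) : MeasurableEquiv.piCongrLeft (fun _ => ℝ) e.toEquiv x w = x (e.symm w) := by
    simp only [MeasurableEquiv.coe_piCongrLeft, Equiv.piCongrLeft_apply, eq_rec_constant]; rfl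
  simp only [mem_preimage, mem_ofPred_eq, happ]
  refine and_congr (e.toEquiv.forall_congr fun {v} => ?_)
    ⟨fun h i j hij => ?_, fun h i j hij => ?_⟩
  · simp
  · exact h (e.symm.map_adj_iff.mpr hij)
  · simpa using h (e.map_adj_iff.mpr hij)

theorem betaFn_comm (r s : ℝ) : betaFn r s = betaFn s r := by
  have reflect := intervalIntegral.integral_comp_sub_left
    (fun x : ℝ => x ^ (s - 1) * (1 - x) ^ (r - 1)) (a := 0) (b := 1) 1
  simp only [sub_sub_cancel, sub_self, sub_zero] at reflect
  rw [betaFn, betaFn, ← reflect]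
  exact intervalIntegral.integral_congr fun x _ => mul_comm _ _

theorem betaFn_natCast {k l : ℕ} (hk : k ≠ 0) (hl : l ≠ 0) :
    betaFn k l = ∫ t in (0 : ℝ)..1, t ^ (k - 1) * (1 - t) ^ (l - 1) := by
  simp only [betaFn, ← Real.rpow_natCast, Nat.cast_sub (Nat.one_le_iff_ne_zero.mpr hk),
    Nat.cast_sub (Nat.one_le_iff_ne_zero.mpr hl), Nat.cast_one]

section Maximum

theorem setLIntegral_Icc_natCast_mul_pow_sub_one {k : ℕ} (hk : k ≠ 0) (c : ℝ) :
    ∫⁻ t in Icc 0 c, ENNReal.ofReal (k * t ^ (k - 1)) = ENNReal.ofReal c ^ k := by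
  rcases le_or_gt c 0 with hc | hc
  · rw [Measure.restrict_eq_zero.mpr (by simp [Real.volume_Icc, hc]), lintegral_zero_measure,
      ENNReal.ofReal_eq_zero.mpr hc, zero_pow hk]
  have hint : ∫ t in Icc 0 c, (k : ℝ) * t ^ (k - 1) = c ^ k := by
    obtain ⟨j, rfl⟩ := Nat.exists_eq_succ_of_ne_zero hk
    rw [integral_Icc_eq_integral_Ioc, ← intervalIntegral.integral_of_le hc.le,
      intervalIntegral.integral_const_mul, integral_pow]
    field_simp
    simp
  rw [← ofReal_integral_eq_lintegral_ofReal (f := fun t => (k : ℝ) * t ^ (k - 1))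
      (continuous_const.mul (continuous_pow _)).integrableOn_Icc
      ((ae_restrict_iff' measurableSet_Icc).mpr (ae_of_all _ fun t ht =>
        mul_nonneg k.cast_nonneg (pow_nonneg ht.1 _))),
    hint, ENNReal.ofReal_pow hc.le]

variable {ι : Type*} [Fintype ι] [Nonempty ι]

theorem measurable_univ_sup' :
    Measurable fun u : ι → ℝ => Finset.univ.sup' Finset.univ_nonempty u :=
  (Continuous.finset_sup'_apply _ fun i _ => continuous_apply i).measurable

theorem map_univ_sup'_volume_restrict_Icc :
    (volume.restrict (Icc (0 : ι → ℝ) 1)).map (Finset.univ.sup' Finset.univ_nonempty) =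
      (volume.restrict (Icc (0 : ℝ) 1)).withDensity
        fun t => ENNReal.ofReal (Fintype.card ι * t ^ (Fintype.card ι - 1)) := by
  have : IsFiniteMeasure (volume.restrict (Icc (0 : ι → ℝ) 1)) :=
    isFiniteMeasure_restrict.mpr isCompact_Icc.measure_lt_top.ne
  refine Measure.ext_of_Iic _ _ fun a => ?_
  have hsub : (fun u : ι → ℝ => Finset.univ.sup' Finset.univ_nonempty u) ⁻¹' Iic a ∩ Icc 0 1 =
      Icc 0 fun _ => min a 1 := by
    ext u
    simp [Pi.le_def, forall_and, and_left_comm]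
  have hIic : Iic a ∩ Icc 0 1 = Icc 0 (min a 1) := by
    ext
    simp [and_left_comm]
  rw [Measure.map_apply measurable_univ_sup' measurableSet_Iic,
    Measure.restrict_apply (measurable_univ_sup' measurableSet_Iic),
    withDensity_apply _ measurableSet_Iic, Measure.restrict_restrict measurableSet_Iic,
    hsub, hIic,
    Real.volume_Icc_pi, setLIntegral_Icc_natCast_mul_pow_sub_one Fintype.card_ne_zero]
  simp

theorem setLIntegral_Icc_comp_univ_sup' {g : ℝ → ENNReal} (hg : Measurable g) :
    ∫⁻ u in Icc (0 : ι → ℝ) 1, g (Finset.univ.sup' Finset.univ_nonempty u) =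
      ∫⁻ t in Icc 0 1, ENNReal.ofReal (Fintype.card ι * t ^ (Fintype.card ι - 1)) * g t := by
  rw [← lintegral_map hg measurable_univ_sup', map_univ_sup'_volume_restrict_Icc,
    lintegral_withDensity_eq_lintegral_mul _ (by fun_prop) hg]
  rfl

end Maximum

section BipartitePolytope

variable (α β : Type*)

def bipartitePolytope : Set ((α → ℝ) × (β → ℝ)) :=
  {p | p.1 ∈ Icc 0 1 ∧ p.2 ∈ Icc 0 1 ∧ ∀ a b, p.1 a + p.2 b ≤ 1}

theorem isClosed_bipartitePolytope : IsClosed (bipartitePolytope α β) := by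
  simp only [bipartitePolytope, ofPred_and, ofPred_forall]
  exact (isClosed_Icc.preimage continuous_fst).inter ((isClosed_Icc.preimage continuous_snd).inter
    (isClosed_iInter fun a => isClosed_iInter fun b => isClosed_le (by fun_prop) continuous_const))

theorem gvol_completeBipartiteGraph_eq_volume_bipartitePolytope [Fintype α] [Fintype β] :
    gvol (completeBipartiteGraph α β) = (volume (bipartitePolytope α β)).toReal := by
  rw [gvol, ← (volume_measurePreserving_sumPiEquivProdPi_symm fun _ : α ⊕ β => ℝ)
    |>.measure_preimage_equiv]
  congr 2
  ext ⟨u, v⟩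
  simp [bipartitePolytope, MeasurableEquiv.coe_sumPiEquivProdPi_symm, Sum.forall, Pi.le_def,
    forall_and, add_comm (v _), forall_comm (α := β), and_comm, and_left_comm, and_assoc]

variable {α β} [Fintype α] [Nonempty α]

theorem preimage_mk_bipartitePolytope {u : α → ℝ} (hu : u ∈ Icc 0 1) :
    Prod.mk u ⁻¹' bipartitePolytope α β =
      Icc 0 fun _ => 1 - Finset.univ.sup' Finset.univ_nonempty u := by
  set M := Finset.univ.sup' Finset.univ_nonempty u
  have hle_M (a : α) : u a ≤ M := Finset.le_sup' u (Finset.mem_univ a)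
  have hM_nonneg : 0 ≤ M := (hu.1 (Classical.arbitrary α)).trans (hle_M _)
  ext v
  constructor
  · rintro ⟨-, hv, huv⟩
    refine ⟨hv.1, fun b => ?_⟩
    have : M ≤ 1 - v b := Finset.sup'_le _ _ fun a _ => by linarith [huv a b]
    change v b ≤ 1 - M
    linarith
  · rintro ⟨hv_nonneg, hv_le⟩
    exact ⟨hu, ⟨hv_nonneg, fun b => show v b ≤ 1 by linarith [hv_le b]⟩,
      fun a b => by linarith [hle_M a, hv_le b]⟩

variable [Fintype β]

theorem volume_bipartitePolytope :
    volume (bipartitePolytope α β) = ∫⁻ u in Icc (0 : α → ℝ) 1,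
      ENNReal.ofReal (1 - Finset.univ.sup' Finset.univ_nonempty u) ^ Fintype.card β := by
  rw [Measure.volume_eq_prod, Measure.prod_apply (isClosed_bipartitePolytope α β).measurableSet,
    ← lintegral_indicator measurableSet_Icc]
  congr 1 with u
  by_cases hu : u ∈ Icc 0 1
  · simp [preimage_mk_bipartitePolytope hu, Real.volume_Icc_pi, hu]
  · rw [indicator_of_notMem hu, show Prod.mk u ⁻¹' bipartitePolytope α β = ∅ from
      eq_empty_of_forall_notMem fun v hv => hu hv.1, measure_empty]

theorem gvol_completeBipartiteGraph :
    gvol (completeBipartiteGraph α β) =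
      Fintype.card α * betaFn (Fintype.card α) (Fintype.card β + 1) := by
  set k := Fintype.card α
  set n := Fintype.card β
  have hnonneg (t : ℝ) (ht : t ∈ Icc 0 1) : 0 ≤ k * t ^ (k - 1) * (1 - t) ^ n :=
    mul_nonneg (mul_nonneg k.cast_nonneg (pow_nonneg ht.1 _)) (pow_nonneg (sub_nonneg.mpr ht.2) _)
  calc gvol (completeBipartiteGraph α β)
      = (∫⁻ t in Icc (0 : ℝ) 1,
          ENNReal.ofReal (k * t ^ (k - 1)) * ENNReal.ofReal (1 - t) ^ n).toReal := by
        rw [gvol_completeBipartiteGraph_eq_volume_bipartitePolytope, volume_bipartitePolytope,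
          setLIntegral_Icc_comp_univ_sup' (g := fun t => ENNReal.ofReal (1 - t) ^ n) (by fun_prop)]
    _ = (∫⁻ t in Icc (0 : ℝ) 1, ENNReal.ofReal (k * t ^ (k - 1) * (1 - t) ^ n)).toReal := by
        congr 1
        refine setLIntegral_congr_fun measurableSet_Icc fun t ht => ?_
        rw [← ENNReal.ofReal_pow (sub_nonneg.mpr ht.2), ← ENNReal.ofReal_mul
          (mul_nonneg k.cast_nonneg (pow_nonneg ht.1 _))]
    _ = ∫ t in Icc (0 : ℝ) 1, k * t ^ (k - 1) * (1 - t) ^ n := by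
        rw [integral_eq_lintegral_of_nonneg_ae ((ae_restrict_iff' measurableSet_Icc).mpr
          (ae_of_all _ hnonneg)) (by fun_prop)]
    _ = k * ∫ t in (0 : ℝ)..1, t ^ (k - 1) * (1 - t) ^ n := by
        rw [integral_Icc_eq_integral_Ioc, ← intervalIntegral.integral_of_le zero_le_one,
          ← intervalIntegral.integral_const_mul]
        simp only [mul_assoc]
    _ = k * betaFn k (n + 1) := by
        rw [← Nat.cast_succ, betaFn_natCast Fintype.card_ne_zero n.succ_ne_zero, Nat.succ_sub_one]

end BipartitePolytope

/-- `vol(K_{m,n}) = m·B(m, n+1) = n·B(m+1, n)` where `B` is the beta function. -/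
theorem vol_completeBipartite_beta (m n : ℕ) (hm : 1 ≤ m) (hn : 1 ≤ n) :
    gvol (completeBipartiteGraph (Fin m) (Fin n)) = (m : ℝ) * betaFn m (n + 1) ∧
    gvol (completeBipartiteGraph (Fin m) (Fin n)) = (n : ℝ) * betaFn (m + 1) n := by
  have : Nonempty (Fin m) := Fin.pos_iff_nonempty.mp hm
  have : Nonempty (Fin n) := Fin.pos_iff_nonempty.mp hn
  constructor
  · simpa using gvol_completeBipartiteGraph (α := Fin m) (β := Fin n)
  · rw [(SimpleGraph.completeBipartiteGraphComm _ _).gvol_eq, gvol_completeBipartiteGraph,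
      betaFn_comm]
    simp
end
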